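/- Let A ∈ R^{n×K} be strictly positive with rows in Δ_K, P symmetric stochastic with eigendecomposition P = QΛQ^T (eigenvalues descending, M distinct eigenvalues λ_{n_s} with multiplicities κ_{n_s}, ŝ the largest index with λ_{n_ŝ} > 0), and â = Q^T log A. Fix i. The sequence W_i^{(r)} of the multiplicative filtering iteration (ε = 0) converges to a unit vector if and only if A fulfills: whenever for some k,l with l ≠ k all quantities c_{l,k}(s) := Σ_{j=n_s}^{n_s+κ_{n_s}−1} q_{ij}(â_{jl} − â_{jk}) vanish for s = 1,...,ŝ, there exist l̃ and s̃ ≤ ŝ with c_{l̃,k}(s̃) > 0 and c_{l̃,k}(s) = 0 for all s < s̃. -/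

import Mathlib

/-!
Taking logarithms linearises the iteration: `W^{(r)}_i` is the softmax of row `i` of
`(I + P)^r log A`. In the eigenbasis of `P` the gap between the logits of labels `l` and `k` is
the exponential sum `∑_ν c_{l,k}(ν) (1 + ν)^r`, whose bases `1 + ν` are nonnegative by
Gershgorin's theorem. Such a sum stays bounded when `c_{l,k}` vanishes at every positive
eigenvalue, and otherwise tends to `±∞` with the sign of its coefficient at the largest positive
eigenvalue where it does not vanish. The row converges to `e_k` iff every gap against `k` tends
to `-∞`. "The gap of `l` over `k` tends to `+∞`" is a strict order on the finite set of labels;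
a maximal label exists, and property (PI) rules out a bounded gap against it, so the row
converges to it.
-/

open Matrix Filter Finset Real Topology

section Softmax

variable {ι : Type*} [Fintype ι]

noncomputable def softmax (x : ι → ℝ) : ι → ℝ := fun k => exp (x k) / ∑ k', exp (x k')

lemma exp_le_sum_exp (x : ι → ℝ) (k : ι) : exp (x k) ≤ ∑ k', exp (x k') :=
  single_le_sum (fun k' _ => (exp_pos (x k')).le) (mem_univ k)

lemma sum_exp_pos (x : ι → ℝ) (k : ι) : 0 < ∑ k', exp (x k') :=
  (exp_pos _).trans_le (exp_le_sum_exp x k)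

lemma softmax_pos (x : ι → ℝ) (k : ι) : 0 < softmax x k :=
  div_pos (exp_pos _) (sum_exp_pos x k)

lemma sum_softmax (x : ι → ℝ) (k : ι) : ∑ k', softmax x k' = 1 := by
  simp only [softmax, ← sum_div]
  exact div_self (sum_exp_pos x k).ne'

lemma softmax_le_exp_sub (x : ι → ℝ) (l k : ι) : softmax x l ≤ exp (x l - x k) := by
  rw [exp_sub]
  exact div_le_div_of_nonneg_left (exp_pos _).le (exp_pos _) (exp_le_sum_exp x k)

lemma softmax_div_softmax (x : ι → ℝ) (l k : ι) :
    softmax x l / softmax x k = exp (x l - x k) := by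
  rw [softmax, softmax, div_div_div_cancel_right₀ (sum_exp_pos x k).ne', exp_sub]

lemma softmax_log {p : ι → ℝ} (hp : ∀ k, 0 < p k) (hp1 : ∑ k, p k = 1) :
    softmax (fun k => log (p k)) = p := by
  funext k
  simp [softmax, exp_log (hp _), hp1]

lemma div_sum_eq_softmax {u x : ι → ℝ} {c : ℝ} (hc : 0 < c) (hu : ∀ k, u k = c * exp (x k))
    (k : ι) : u k / ∑ k', u k' = softmax x k := by
  simp only [hu, ← mul_sum, softmax]
  exact mul_div_mul_left _ _ hc.ne'

theorem tendsto_softmax_pi_single_iff [DecidableEq ι] {s : ℕ → ι → ℝ} {k : ι} :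
    Tendsto (fun r => softmax (s r)) atTop (𝓝 (Pi.single k 1)) ↔
      ∀ l, l ≠ k → Tendsto (fun r => s r l - s r k) atTop atBot := by
  simp only [tendsto_pi_nhds, Pi.single_apply]
  constructor
  · intro h l hl
    have hl0 := h l
    have hk1 := h k
    simp only [if_neg hl] at hl0 hk1
    have hratio : Tendsto (fun r => softmax (s r) l / softmax (s r) k) atTop (𝓝 (0 / 1)) :=
      hl0.div hk1 one_ne_zero
    simp only [softmax_div_softmax, zero_div] at hratio
    exact tendsto_exp_comp_nhds_zero.1 hratio
  · intro h
    have hzero : ∀ l, l ≠ k → Tendsto (fun r => softmax (s r) l) atTop (𝓝 0) := fun l hl =>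
      squeeze_zero (fun r => (softmax_pos _ _).le) (fun r => softmax_le_exp_sub _ _ k)
        (tendsto_exp_atBot.comp (h l hl))
    intro l
    by_cases hl : l = k
    · subst hl
      have hrest : Tendsto (fun r => ∑ l' ∈ univ.erase l, softmax (s r) l') atTop (𝓝 0) := by
        simpa using
          tendsto_finsetSum (univ.erase l) fun l' hl' => hzero l' (ne_of_mem_erase hl')
      have hsplit : ∀ r, softmax (s r) l = 1 - ∑ l' ∈ univ.erase l, softmax (s r) l' :=
        fun r => by
          rw [← sum_softmax (s r) l, ← add_sum_erase _ _ (mem_univ l), add_sub_cancel_right]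
      rw [if_pos rfl, funext hsplit]
      simpa using (tendsto_const_nhds (x := (1 : ℝ))).sub hrest
    · simpa [hl] using hzero l hl

end Softmax

section PowerSums

variable {E : Finset ℝ} {a : ℝ → ℝ} {ν₀ : ℝ}

lemma tendsto_sum_mul_one_add_pow_div (hE : ∀ ν ∈ E, -1 ≤ ν) (hν₀ : ν₀ ∈ E)
    (h₀ : -1 < ν₀) (htop : ∀ ν ∈ E, ν₀ < ν → a ν = 0) :
    Tendsto (fun r : ℕ => (∑ ν ∈ E, a ν * (1 + ν) ^ r) / (1 + ν₀) ^ r) atTop (𝓝 (a ν₀)) := by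
  have hb : 0 < 1 + ν₀ := by linarith
  have hterm : ∀ ν ∈ E, Tendsto (fun r : ℕ => a ν * ((1 + ν) / (1 + ν₀)) ^ r) atTop
      (𝓝 (if ν = ν₀ then a ν₀ else 0)) := by
    intro ν hν
    rcases lt_trichotomy ν ν₀ with hlt | rfl | hgt
    · rw [if_neg hlt.ne, ← mul_zero (a ν)]
      refine (tendsto_pow_atTop_nhds_zero_of_lt_one ?_ ?_).const_mul (a ν)
      · exact div_nonneg (by linarith [hE ν hν]) hb.le
      · exact (div_lt_one hb).2 (by linarith)
    · simp [div_self hb.ne']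
    · simp [htop ν hν hgt, hgt.ne']
  have hlim := tendsto_finsetSum E hterm
  rw [sum_ite_eq' E ν₀, if_pos hν₀] at hlim
  refine hlim.congr fun r => ?_
  rw [sum_div]
  exact sum_congr rfl fun ν _ => by rw [div_pow, mul_div_assoc]

lemma tendsto_sum_mul_one_add_pow_atTop (hE : ∀ ν ∈ E, -1 ≤ ν) (hν₀ : ν₀ ∈ E)
    (h₀ : 0 < ν₀) (htop : ∀ ν ∈ E, ν₀ < ν → a ν = 0) (hpos : 0 < a ν₀) :
    Tendsto (fun r : ℕ => ∑ ν ∈ E, a ν * (1 + ν) ^ r) atTop atTop := by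
  have hgrow : Tendsto (fun r : ℕ => (1 + ν₀) ^ r) atTop atTop :=
    tendsto_pow_atTop_atTop_of_one_lt (by linarith)
  refine ((tendsto_sum_mul_one_add_pow_div hE hν₀ (by linarith) htop).pos_mul_atTop hpos
    hgrow).congr fun r => ?_
  exact div_mul_cancel₀ _ (pow_ne_zero _ (by linarith))

lemma tendsto_sum_mul_one_add_pow_atBot (hE : ∀ ν ∈ E, -1 ≤ ν) (hν₀ : ν₀ ∈ E)
    (h₀ : 0 < ν₀) (htop : ∀ ν ∈ E, ν₀ < ν → a ν = 0) (hneg : a ν₀ < 0) :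
    Tendsto (fun r : ℕ => ∑ ν ∈ E, a ν * (1 + ν) ^ r) atTop atBot := by
  have h := tendsto_sum_mul_one_add_pow_atTop (a := fun ν => -a ν) hE hν₀ h₀
    (fun ν hν hlt => by simp [htop ν hν hlt]) (neg_pos.2 hneg)
  simpa [neg_mul, sum_neg_distrib] using h

lemma abs_sum_mul_one_add_pow_le (hE : ∀ ν ∈ E, -1 ≤ ν) (hz : ∀ ν ∈ E, 0 < ν → a ν = 0)
    (r : ℕ) : |∑ ν ∈ E, a ν * (1 + ν) ^ r| ≤ ∑ ν ∈ E, |a ν| := by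
  refine (abs_sum_le_sum_abs _ _).trans (sum_le_sum fun ν hν => ?_)
  rcases lt_or_ge 0 ν with hpos | hnonpos
  · simp [hz ν hν hpos]
  · have hbase : 0 ≤ 1 + ν := by linarith [hE ν hν]
    rw [abs_mul, abs_of_nonneg (pow_nonneg hbase r)]
    exact mul_le_of_le_one_right (abs_nonneg _) (pow_le_one₀ hbase (by linarith))

lemma not_tendsto_sum_mul_one_add_pow_atTop (hE : ∀ ν ∈ E, -1 ≤ ν)
    (hz : ∀ ν ∈ E, 0 < ν → a ν = 0) :
    ¬ Tendsto (fun r : ℕ => ∑ ν ∈ E, a ν * (1 + ν) ^ r) atTop atTop := fun h => by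
  obtain ⟨r, hr⟩ := (h.eventually_gt_atTop (∑ ν ∈ E, |a ν|)).exists
  exact hr.not_ge (le_of_abs_le (abs_sum_mul_one_add_pow_le hE hz r))

lemma not_tendsto_sum_mul_one_add_pow_atBot (hE : ∀ ν ∈ E, -1 ≤ ν)
    (hz : ∀ ν ∈ E, 0 < ν → a ν = 0) :
    ¬ Tendsto (fun r : ℕ => ∑ ν ∈ E, a ν * (1 + ν) ^ r) atTop atBot := fun h => by
  obtain ⟨r, hr⟩ := (h.eventually_lt_atBot (-∑ ν ∈ E, |a ν|)).exists
  exact hr.not_ge (neg_le_of_abs_le (abs_sum_mul_one_add_pow_le hE hz r))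

lemma forall_pos_eq_zero_or_exists_leading (E : Finset ℝ) (a : ℝ → ℝ) :
    (∀ ν ∈ E, 0 < ν → a ν = 0) ∨
      ∃ ν₀ ∈ E, 0 < ν₀ ∧ a ν₀ ≠ 0 ∧ ∀ ν ∈ E, ν₀ < ν → a ν = 0 := by
  rw [or_iff_not_imp_left]
  intro h
  push Not at h
  obtain ⟨ν₀, hν₀, hmax⟩ := exists_max_image {ν ∈ E | 0 < ν ∧ a ν ≠ 0} id
    (by simpa [Finset.Nonempty] using h)
  simp only [mem_filter, id] at hν₀ hmax
  refine ⟨ν₀, hν₀.1, hν₀.2.1, hν₀.2.2, fun ν hν hlt => ?_⟩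
  by_contra hne
  exact (hmax ν ⟨hν, hν₀.2.1.trans hlt, hne⟩).not_gt hlt

theorem tendsto_sum_mul_one_add_pow_atTop_iff (hE : ∀ ν ∈ E, -1 ≤ ν) :
    Tendsto (fun r : ℕ => ∑ ν ∈ E, a ν * (1 + ν) ^ r) atTop atTop ↔
      ∃ ν₀ ∈ E, 0 < ν₀ ∧ 0 < a ν₀ ∧ ∀ ν ∈ E, ν₀ < ν → a ν = 0 := by
  refine ⟨fun h => ?_, fun ⟨ν₀, hν₀, h₀, hpos, htop⟩ =>
    tendsto_sum_mul_one_add_pow_atTop hE hν₀ h₀ htop hpos⟩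
  rcases forall_pos_eq_zero_or_exists_leading E a with hz | ⟨ν₀, hν₀, h₀, hne, htop⟩
  · exact absurd h (not_tendsto_sum_mul_one_add_pow_atTop hE hz)
  · refine ⟨ν₀, hν₀, h₀, hne.lt_or_gt.resolve_left fun hneg => ?_, htop⟩
    exact h.not_tendsto disjoint_atTop_atBot
      (tendsto_sum_mul_one_add_pow_atBot hE hν₀ h₀ htop hneg)

lemma tendsto_sum_mul_one_add_pow_atBot_of_not_tendsto_atTop (hE : ∀ ν ∈ E, -1 ≤ ν)
    (hz : ¬ ∀ ν ∈ E, 0 < ν → a ν = 0)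
    (htop : ¬ Tendsto (fun r : ℕ => ∑ ν ∈ E, a ν * (1 + ν) ^ r) atTop atTop) :
    Tendsto (fun r : ℕ => ∑ ν ∈ E, a ν * (1 + ν) ^ r) atTop atBot := by
  rcases forall_pos_eq_zero_or_exists_leading E a with hz' | ⟨ν₀, hν₀, h₀, hne, hlead⟩
  · exact absurd hz' hz
  · rcases hne.lt_or_gt with hneg | hpos
    · exact tendsto_sum_mul_one_add_pow_atBot hE hν₀ h₀ hlead hneg
    · exact absurd (tendsto_sum_mul_one_add_pow_atTop hE hν₀ h₀ hlead hpos) htop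

end PowerSums

section LogitGaps

variable {ι : Type*} [Fintype ι] [DecidableEq ι] [Nonempty ι] {E : Finset ℝ}
  {s : ℕ → ι → ℝ} {a : ι → ι → ℝ → ℝ}

theorem exists_tendsto_softmax_iff (hE : ∀ ν ∈ E, -1 ≤ ν)
    (hs : ∀ l k, (fun r => s r l - s r k) = fun r : ℕ => ∑ ν ∈ E, a l k ν * (1 + ν) ^ r) :
    (∃ k, Tendsto (fun r => softmax (s r)) atTop (𝓝 (Pi.single k 1))) ↔
      ∀ k l, l ≠ k → (∀ ν, 0 < ν → ν ∈ E → a l k ν = 0) →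
        ∃ lt ν₀, 0 < ν₀ ∧ ν₀ ∈ E ∧ 0 < a lt k ν₀ ∧ ∀ ν, ν₀ < ν → ν ∈ E → a lt k ν = 0 := by
  simp only [tendsto_softmax_pi_single_iff]
  constructor
  · rintro ⟨k₀, hk₀⟩ k l hlk hz
    have hgap : Tendsto (fun r => s r k₀ - s r k) atTop atTop := by
      by_cases hk : k = k₀
      · subst hk
        have h := hk₀ l hlk
        rw [hs] at h
        exact absurd h (not_tendsto_sum_mul_one_add_pow_atBot hE fun ν hν h₀ => hz ν h₀ hν)
      · exact (tendsto_neg_atBot_atTop.comp (hk₀ k hk)).congr fun r => neg_sub _ _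
    rw [hs, tendsto_sum_mul_one_add_pow_atTop_iff hE] at hgap
    obtain ⟨ν₀, hν₀, h₀, hpos, htop⟩ := hgap
    exact ⟨k₀, ν₀, h₀, hν₀, hpos, fun ν hlt hν => htop ν hν hlt⟩
  · intro hPI
    let R : ι → ι → Prop := fun l k => Tendsto (fun r => s r l - s r k) atTop atTop
    have : IsTrans ι R := ⟨fun l k m hlk hkm => by
      simpa using hlk.atTop_add_atTop hkm⟩
    have : Std.Irrefl R := ⟨fun k h => by
      simp only [R, sub_self] at h
      exact not_tendsto_const_atTop 0 _ h⟩
    obtain ⟨k₀, -, hmax⟩ := (Finite.wellFounded_of_trans_of_irrefl R).has_min Set.univ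
      Set.univ_nonempty
    refine ⟨k₀, fun l hl => ?_⟩
    have hmax' : ∀ l, ¬ Tendsto (fun r => s r l - s r k₀) atTop atTop := fun l =>
      hmax l (Set.mem_univ l)
    simp only [hs] at hmax' ⊢
    refine tendsto_sum_mul_one_add_pow_atBot_of_not_tendsto_atTop hE (fun hz => ?_) (hmax' l)
    obtain ⟨lt, ν₀, h₀, hν₀, hpos, htop⟩ := hPI k₀ l hl fun ν h₀ hν => hz ν hν h₀
    exact hmax' lt
      (tendsto_sum_mul_one_add_pow_atTop hE hν₀ h₀ (fun ν hν hlt => htop ν hlt hν) hpos)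

end LogitGaps

section Filtering

variable {ι κ : Type*} [Fintype ι] [Fintype κ]

noncomputable def filterStep (P : Matrix ι ι ℝ) (W : Matrix ι κ ℝ) : Matrix ι κ ℝ :=
  Matrix.of fun i k => (W i k * ∏ j, W j k ^ P i j) / ∑ k', W i k' * ∏ j, W j k' ^ P i j

lemma filterStep_softmax [DecidableEq ι] (P : Matrix ι ι ℝ) (X : Matrix ι κ ℝ) :
    filterStep P (Matrix.of fun i => softmax (X i)) =
      Matrix.of fun i => softmax (((1 + P) * X : Matrix ι κ ℝ) i) := by
  ext i k
  simp only [filterStep, of_apply]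
  have hZ : ∀ j, 0 < ∑ k', exp (X j k') := fun j => sum_exp_pos (X j) k
  refine div_sum_eq_softmax (u := fun k => softmax (X i) k * ∏ j, softmax (X j) k ^ P i j)
    (c := (∑ k', exp (X i k'))⁻¹ * ∏ j, ((∑ k', exp (X j k')) ^ P i j)⁻¹)
    (mul_pos (inv_pos.2 (hZ i)) (prod_pos fun j _ => inv_pos.2 (rpow_pos_of_pos (hZ j) _)))
    (fun k => ?_) k
  have hpow : ∀ j,
      softmax (X j) k ^ P i j = exp (P i j * X j k) * ((∑ k', exp (X j k')) ^ P i j)⁻¹ :=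
    fun j => by
      rw [softmax, div_rpow (exp_pos _).le (hZ j).le, mul_comm (P i j), exp_mul, div_eq_mul_inv]
  rw [prod_congr rfl fun j _ => hpow j, prod_mul_distrib, ← exp_sum, Matrix.add_mul,
    Matrix.one_mul, Matrix.add_apply, mul_apply, exp_add, softmax, div_eq_mul_inv]
  ring

theorem eq_softmax_of_filterStep [DecidableEq ι] {P : Matrix ι ι ℝ} {X : Matrix ι κ ℝ}
    {W : ℕ → Matrix ι κ ℝ} (h₀ : W 0 = Matrix.of fun i => softmax (X i))
    (hstep : ∀ r, W (r + 1) = filterStep P (W r)) (r : ℕ) :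
    W r = Matrix.of fun i => softmax (((1 + P) ^ r * X : Matrix ι κ ℝ) i) := by
  induction r with
  | zero => simpa using h₀
  | succ r ih => rw [hstep, ih, filterStep_softmax, pow_succ', Matrix.mul_assoc]

end Filtering

section Spectral

variable {n : Type*} [Fintype n] [DecidableEq n]

lemma one_add_pow_eq_conj_diagonal {R : Type*} [CommRing R] {P Q : Matrix n n R} {lam : n → R}
    (hQ : Q * Qᵀ = 1) (hQ' : Qᵀ * Q = 1) (hP : P = Q * diagonal lam * Qᵀ) (r : ℕ) :
    (1 + P) ^ r = Q * diagonal (fun j => (1 + lam j) ^ r) * Qᵀ := by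
  let u : (Matrix n n R)ˣ := ⟨Q, Qᵀ, hQ, hQ'⟩
  have h : 1 + P = (u : Matrix n n R) * diagonal (1 + lam) * (↑u⁻¹ : Matrix n n R) := by
    change 1 + P = Q * diagonal (1 + lam) * Qᵀ
    rw [hP, show diagonal (1 + lam) = 1 + diagonal lam by rw [← diagonal_one, diagonal_add]; rfl,
      Matrix.mul_add, Matrix.add_mul, Matrix.mul_one, hQ]
  rw [h, Units.conj_pow, diagonal_pow]
  rfl

lemma hasEigenvalue_of_mul_eq_mul_diagonal {K : Type*} [Field K] {P Q : Matrix n n K}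
    {lam : n → K} (hPQ : P * Q = Q * diagonal lam) (hQ : Qᵀ * Q = 1) (j : n) :
    Module.End.HasEigenvalue (toLin' P) (lam j) := by
  refine Module.End.hasEigenvalue_of_hasEigenvector (x := fun m => Q m j) ⟨?_, fun h => ?_⟩
  · rw [Module.End.mem_eigenspace_iff, toLin'_apply]
    funext m
    have hcol := congrFun (congrFun hPQ m) j
    rw [mul_diagonal, mul_apply] at hcol
    simpa [mulVec, dotProduct, mul_comm] using hcol
  · have := congrFun (congrFun hQ j) j
    simp [mul_apply, funext_iff.1 h] at this  

lemma abs_le_one_of_hasEigenvalue {P : Matrix n n ℝ} (hP : P ∈ rowStochastic ℝ n) {μ : ℝ}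
    (hμ : Module.End.HasEigenvalue (toLin' P) μ) : |μ| ≤ 1 := by
  obtain ⟨k, hk⟩ := eigenvalue_mem_ball hμ
  have hnonneg : ∀ j, 0 ≤ P k j := fun j => nonneg_of_mem_rowStochastic hP
  have hradius : ∑ j ∈ univ.erase k, ‖P k j‖ = 1 - P k k := by
    rw [sum_congr rfl fun j _ => Real.norm_of_nonneg (hnonneg j), sum_erase_eq_sub (mem_univ k),
      sum_row_of_mem_rowStochastic hP]
  rw [Metric.mem_closedBall, Real.dist_eq, hradius, abs_le] at hk
  rw [abs_le]
  constructor <;> linarith [hnonneg k]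

end Spectral

lemma mul_diagonal_mul_apply_sub_eq_sum_image {m n κ R : Type*} [Fintype n] [DecidableEq n]
    [CommRing R] [DecidableEq R] (Q : Matrix m n R) (lam : n → R) (f : R → R)
    (B : Matrix n κ R) (i : m) (l k : κ) :
    (Q * diagonal (fun j => f (lam j)) * B) i l - (Q * diagonal (fun j => f (lam j)) * B) i k =
      ∑ ν ∈ univ.image lam, (∑ j ∈ univ.filter (fun j => lam j = ν), Q i j * (B j l - B j k)) *
        f ν := by
  rw [Matrix.mul_assoc, mul_apply, mul_apply, ← sum_sub_distrib,
    ← sum_fiberwise_of_maps_to fun j _ => mem_image_of_mem lam (mem_univ j)]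
  refine sum_congr rfl fun ν _ => ?_
  rw [sum_mul]
  refine sum_congr rfl fun j hj => ?_
  rw [diagonal_mul, diagonal_mul, (mem_filter.1 hj).2]
  ring

theorem stmt_16_general {n K : ℕ} (A : Matrix (Fin n) (Fin K) ℝ)
    (hApos : ∀ i k, 0 < A i k) (hArow : ∀ i, ∑ k, A i k = 1)
    (P Q : Matrix (Fin n) (Fin n) ℝ) (lam : Fin n → ℝ)
    (hnonneg : ∀ i j, 0 ≤ P i j) (hrowP : ∀ i, ∑ j, P i j = 1)
    (hQ : Q * Qᵀ = 1) (hQ' : Qᵀ * Q = 1)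
    (hPdec : P = Q * Matrix.diagonal lam * Qᵀ)
    (ahat : Matrix (Fin n) (Fin K) ℝ)
    (hahat : ahat = Qᵀ * (Matrix.of fun i' k' => Real.log (A i' k')))
    (i : Fin n)
    (c : Fin K → Fin K → ℝ → ℝ)
    (hc : c = fun l k ν =>
      ∑ j ∈ Finset.univ.filter (fun j => lam j = ν), Q i j * (ahat j l - ahat j k))
    (W : ℕ → Matrix (Fin n) (Fin K) ℝ)
    (hW0 : W 0 = A)
    (hWiter : ∀ r i' k,
      W (r + 1) i' k =
        (W r i' k * ∏ j, (W r j k) ^ (P i' j)) /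
          (∑ k', W r i' k' * ∏ j, (W r j k') ^ (P i' j))) :
    (∃ k : Fin K, Tendsto (fun r => W r i) atTop
        (nhds (fun k' : Fin K => if k' = k then (1 : ℝ) else 0))) ↔
    (∀ k l : Fin K, l ≠ k →
      (∀ ν : ℝ, 0 < ν → (∃ j, lam j = ν) → c l k ν = 0) →
      ∃ (lt : Fin K) (νt : ℝ), 0 < νt ∧ (∃ j, lam j = νt) ∧
        0 < c lt k νt ∧
        ∀ ν : ℝ, νt < ν → (∃ j, lam j = ν) → c lt k ν = 0) := by
  obtain ⟨k, -, -⟩ := exists_ne_zero_of_sum_ne_zero (s := univ) (f := A i)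
    (by rw [hArow i]; exact one_ne_zero)
  have : Nonempty (Fin K) := ⟨k⟩
  set X : Matrix (Fin n) (Fin K) ℝ := Matrix.of fun i' k' => log (A i' k')
  have hW : ∀ r, W r = Matrix.of fun i' => softmax (((1 + P) ^ r * X : Matrix _ _ ℝ) i') :=
    eq_softmax_of_filterStep
      (by ext i' k; exact hW0 ▸ congrFun (softmax_log (hApos i') (hArow i')).symm k)
      fun r => by ext i' k; exact hWiter r i' k
  have hE : ∀ ν ∈ univ.image lam, -1 ≤ ν := by
    have hPQ : P * Q = Q * diagonal lam := by
      rw [hPdec, Matrix.mul_assoc _ Qᵀ, hQ', Matrix.mul_one]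
    simp only [mem_image, mem_univ, true_and, forall_exists_index, forall_apply_eq_imp_iff]
    exact fun j => neg_le_of_abs_le (abs_le_one_of_hasEigenvalue
      (mem_rowStochastic_iff_sum.2 ⟨hnonneg, hrowP⟩)
      (hasEigenvalue_of_mul_eq_mul_diagonal hPQ hQ' j))
  have hgap : ∀ l k, (fun r => ((1 + P) ^ r * X : Matrix _ _ ℝ) i l
      - ((1 + P) ^ r * X : Matrix _ _ ℝ) i k) =
      fun r : ℕ => ∑ ν ∈ univ.image lam, c l k ν * (1 + ν) ^ r := fun l k => funext fun r => by
    rw [one_add_pow_eq_conj_diagonal hQ hQ' hPdec, Matrix.mul_assoc _ Qᵀ, ← hahat, hc,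
      mul_diagonal_mul_apply_sub_eq_sum_image Q lam (fun ν => (1 + ν) ^ r)]
  have key := exists_tendsto_softmax_iff hE hgap
  simp only [mem_image, mem_univ, true_and] at key
  simp only [hW, ← Pi.single_apply]
  exact key

/-- Convergence of a row of the multiplicative filtering iterates (ε = 0) to a
unit vector is equivalent to property (PI). Here `P = Q Λ Qᵀ` with `Q`
orthogonal and eigenvalues `lam` in descending order, `â = Qᵀ log A`, and for an
eigenvalue `ν` the quantity `c l k ν` is the group sum
`∑_{j : lam j = ν} q_{ij} (â_{jl} − â_{jk})`. -/
theorem stmt_16 {n K : ℕ} (A : Matrix (Fin n) (Fin K) ℝ)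
    (hApos : ∀ i k, 0 < A i k) (hArow : ∀ i, ∑ k, A i k = 1)
    (P Q : Matrix (Fin n) (Fin n) ℝ) (lam : Fin n → ℝ)
    (hsym : P.IsSymm) (hnonneg : ∀ i j, 0 ≤ P i j) (hrowP : ∀ i, ∑ j, P i j = 1)
    (hQ : Q * Qᵀ = 1) (hQ' : Qᵀ * Q = 1)
    (hdec : ∀ j l : Fin n, j ≤ l → lam l ≤ lam j)
    (hPdec : P = Q * Matrix.diagonal lam * Qᵀ)
    (ahat : Matrix (Fin n) (Fin K) ℝ)
    (hahat : ahat = Qᵀ * (Matrix.of fun i' k' => Real.log (A i' k')))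
    (i : Fin n)
    (c : Fin K → Fin K → ℝ → ℝ)
    (hc : c = fun l k ν =>
      ∑ j ∈ Finset.univ.filter (fun j => lam j = ν), Q i j * (ahat j l - ahat j k))
    (W : ℕ → Matrix (Fin n) (Fin K) ℝ)
    (hW0 : W 0 = A)
    (hWiter : ∀ r i' k,
      W (r + 1) i' k =
        (W r i' k * ∏ j, (W r j k) ^ (P i' j)) /
          (∑ k', W r i' k' * ∏ j, (W r j k') ^ (P i' j))) :
    (∃ k : Fin K, Tendsto (fun r => W r i) atTop
        (nhds (fun k' : Fin K => if k' = k then (1 : ℝ) else 0))) ↔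
    (∀ k l : Fin K, l ≠ k →
      (∀ ν : ℝ, 0 < ν → (∃ j, lam j = ν) → c l k ν = 0) →
      ∃ (lt : Fin K) (νt : ℝ), 0 < νt ∧ (∃ j, lam j = νt) ∧
        0 < c lt k νt ∧
        ∀ ν : ℝ, νt < ν → (∃ j, lam j = ν) → c lt k ν = 0) :=
  stmt_16_general A hApos hArow P Q lam hnonneg hrowP hQ hQ' hPdec ahat hahat i c hc W hW0 hWiter
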